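/- arXiv:2401.00554 — 4 statements merged into one kernel-verified Lean document; each statement's English description precedes it below -/
import Mathlib

section
/- Let d ≥ 1 be an integer, p ∈ [1,∞), s ∈ (0,1), and let Ω ⊆ ℝ^d be an open set symmetric with respect to the hyperplane {x_d = 0}, i.e. (x', x_d) ∈ Ω if and only if (x', −x_d) ∈ Ω. Set Ω⁺ := Ω ∩ {x_d > 0}. For a measurable u : ℝ^d → ℝ with ‖u‖_{W^s_p(Ω⁺)} < ∞, define the even reflection u_even on Ω by u_even(x', x_d) = u(x', x_d) for x_d ≥ 0 and u_even(x', x_d) = u(x', −x_d) for x_d < 0. Then ‖u_even‖_{W^s_p(Ω)} ≤ 4 ‖u‖_{W^s_p(Ω⁺)}. -/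
open MeasureTheory
open scoped ENNReal

/-- Euclidean norm on `Fin d → ℝ`. -/
noncomputable def euclNorm (d : ℕ) (x : Fin d → ℝ) : ℝ := Real.sqrt (∑ i, (x i) ^ 2)

/-- `p`-th power of the Gagliardo seminorm
`[u]_{W^s_p(D)}^p = ∫_D ∫_D |u x - u y|^p / |x - y|^{d + s p}`. -/
noncomputable def gagliardoP (d : ℕ) (D : Set (Fin d → ℝ)) (p s : ℝ)
    (u : (Fin d → ℝ) → ℝ) : ℝ≥0∞ :=
  ∫⁻ x in D, ∫⁻ y in D,
    ENNReal.ofReal (|u x - u y| ^ p / euclNorm d (x - y) ^ ((d : ℝ) + s * p))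

/-- Fractional Sobolev norm `‖u‖_{W^s_p(D)} = ‖u‖_{L^p(D)} + [u]_{W^s_p(D)}`. -/
noncomputable def fracSobolevNorm (d : ℕ) (D : Set (Fin d → ℝ)) (p s : ℝ)
    (u : (Fin d → ℝ) → ℝ) : ℝ≥0∞ :=
  (∫⁻ x in D, ENNReal.ofReal (|u x| ^ p)) ^ (1 / p) + gagliardoP d D p s u ^ (1 / p)

/-! The even reflection is `u ∘ F` for the folding `F x = (x', |x_d|)`. Since `F` is
1-Lipschitz, the Gagliardo kernel of `u ∘ F` at `(x, y)` is dominated by that of `u` at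
`(F x, F y)`. Since `F` is the identity on `Ω⁺`, the measure-preserving reflection `R` across
`{x_d = 0}` on `Ω⁻ = R⁻¹ Ω⁺`, and that hyperplane is null, `∫_Ω g ∘ F = 2 ∫_{Ω⁺} g` for every `g`.
Applied once to `|u|^p` and twice (in `x` and in `y`) to the kernel, this bounds the two parts
of the norm by `2^{1/p}` and `4^{1/p}` times those of `u`, both at most `4` as `p ≥ 1`. -/

lemma ENNReal.mul_rpow_le_of_one_le {c : ℝ≥0∞} (hc : 1 ≤ c) (a : ℝ≥0∞) {t : ℝ} (ht0 : 0 ≤ t)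
    (ht1 : t ≤ 1) : (c * a) ^ t ≤ c * a ^ t := by
  rw [ENNReal.mul_rpow_of_nonneg _ _ ht0]
  gcongr
  simpa using ENNReal.rpow_le_rpow_of_exponent_le hc ht1

lemma euclNorm_pos {d : ℕ} {x : Fin d → ℝ} (hx : x ≠ 0) : 0 < euclNorm d x := by
  obtain ⟨j, hj⟩ := Function.ne_iff.1 hx
  exact Real.sqrt_pos.2 <| Finset.sum_pos' (fun k _ => sq_nonneg (x k))
    ⟨j, Finset.mem_univ j, pow_pos (abs_pos.2 hj) 2 |>.trans_eq (sq_abs _)⟩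

noncomputable def gagliardoKernel (d : ℕ) (p s : ℝ) (u : (Fin d → ℝ) → ℝ)
    (x y : Fin d → ℝ) : ℝ≥0∞ :=
  ENNReal.ofReal (|u x - u y| ^ p / euclNorm d (x - y) ^ ((d : ℝ) + s * p))

lemma gagliardoP_eq_lintegral_gagliardoKernel (d : ℕ) (D : Set (Fin d → ℝ)) (p s : ℝ)
    (u : (Fin d → ℝ) → ℝ) :
    gagliardoP d D p s u = ∫⁻ x in D, ∫⁻ y in D, gagliardoKernel d p s u x y :=
  rfl

lemma gagliardoKernel_comp_le {d : ℕ} {p s : ℝ} (hp : 0 < p) (hexp : 0 ≤ (d : ℝ) + s * p)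
    {f : (Fin d → ℝ) → Fin d → ℝ}
    (hf : ∀ x y, euclNorm d (f x - f y) ≤ euclNorm d (x - y))
    (u : (Fin d → ℝ) → ℝ) (x y : Fin d → ℝ) :
    gagliardoKernel d p s (u ∘ f) x y ≤ gagliardoKernel d p s u (f x) (f y) := by
  by_cases hxy : f x = f y
  · simp [gagliardoKernel, hxy, Real.zero_rpow hp.ne']
  · have hpos := euclNorm_pos (sub_ne_zero.2 hxy)
    exact ENNReal.ofReal_le_ofReal <| div_le_div_of_nonneg_left (by positivity)
      (Real.rpow_pos_of_pos hpos _) (Real.rpow_le_rpow hpos.le (hf x y) hexp)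

section CoordReflection

variable {d : ℕ}

def reflectCoord (i : Fin d) (x : Fin d → ℝ) : Fin d → ℝ := Function.update x i (-x i)

def foldCoord (i : Fin d) (x : Fin d → ℝ) : Fin d → ℝ := Function.update x i |x i|

variable {i : Fin d}

@[simp]
lemma reflectCoord_apply_self (x : Fin d → ℝ) : reflectCoord i x i = -x i := by
  simp [reflectCoord]

lemma reflectCoord_involutive : Function.Involutive (reflectCoord i) := by
  intro x
  simp [reflectCoord]

lemma reflectCoord_eq_pi_map :
    reflectCoord i = fun x j => (if j = i then Neg.neg else id) (x j) := by
  ext x j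
  by_cases h : j = i <;> simp [reflectCoord, h]

lemma measurePreserving_reflectCoord : MeasurePreserving (reflectCoord i) := by
  rw [reflectCoord_eq_pi_map]
  refine volume_preserving_pi fun j => ?_
  split
  · exact Measure.measurePreserving_neg _
  · exact MeasurePreserving.id _

lemma setLIntegral_comp_reflectCoord (f : (Fin d → ℝ) → ℝ≥0∞) (S : Set (Fin d → ℝ)) :
    ∫⁻ x in reflectCoord i ⁻¹' S, f (reflectCoord i x) = ∫⁻ x in S, f x :=
  measurePreserving_reflectCoord.setLIntegral_comp_preimage_emb
    (MeasurableEquiv.ofInvolutive _ reflectCoord_involutive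
      measurePreserving_reflectCoord.measurable).measurableEmbedding f S

lemma foldCoord_of_nonneg {x : Fin d → ℝ} (h : 0 ≤ x i) : foldCoord i x = x := by
  simp [foldCoord, abs_of_nonneg h]

lemma foldCoord_of_neg {x : Fin d → ℝ} (h : x i < 0) : foldCoord i x = reflectCoord i x := by
  simp [foldCoord, reflectCoord, abs_of_neg h]

lemma euclNorm_foldCoord_sub_le (x y : Fin d → ℝ) :
    euclNorm d (foldCoord i x - foldCoord i y) ≤ euclNorm d (x - y) := by
  refine Real.sqrt_le_sqrt (Finset.sum_le_sum fun j _ => ?_)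
  by_cases h : j = i
  · subst h
    simpa [foldCoord, sq_abs] using
      pow_le_pow_left₀ (abs_nonneg _) (abs_abs_sub_abs_le_abs_sub (x j) (y j)) 2
  · simp [foldCoord, h]

lemma lintegral_comp_foldCoord {Ω : Set (Fin d → ℝ)}
    (hsym : ∀ x, x ∈ Ω ↔ reflectCoord i x ∈ Ω) (g : (Fin d → ℝ) → ℝ≥0∞) :
    ∫⁻ x in Ω, g (foldCoord i x) = 2 * ∫⁻ x in Ω ∩ {x | 0 < x i}, g x := by
  have hpos : MeasurableSet {x : Fin d → ℝ | 0 < x i} :=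
    measurableSet_lt measurable_const (measurable_pi_apply i)
  have hneg : MeasurableSet {x : Fin d → ℝ | x i < 0} :=
    measurableSet_lt (measurable_pi_apply i) measurable_const
  have hreflect : reflectCoord i ⁻¹' (Ω ∩ {x | 0 < x i}) =ᵐ[volume]
      (Ω \ {x | 0 < x i} : Set (Fin d → ℝ)) := by
    refine Filter.Eventually.set_eq ?_
    filter_upwards [Measure.ae_eval_ne (fun _ => volume) i 0] with x hx
    simp only [Set.mem_preimage, Set.mem_inter_iff, Set.mem_sdiff, Set.mem_ofPred_eq, ← hsym,
      reflectCoord_apply_self, neg_pos, not_lt]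
    exact and_congr_right fun _ => ⟨le_of_lt, fun h => lt_of_le_of_ne h hx⟩
  have hpos_part : ∫⁻ x in Ω ∩ {x | 0 < x i}, g (foldCoord i x) =
      ∫⁻ x in Ω ∩ {x | 0 < x i}, g x :=
    lintegral_congr_ae <| ae_restrict_of_ae_restrict_of_subset Set.inter_subset_right <|
      ae_restrict_of_forall_mem hpos fun x hx => congrArg g (foldCoord_of_nonneg (le_of_lt hx))
  have hneg_part : ∫⁻ x in Ω \ {x | 0 < x i}, g (foldCoord i x) =
      ∫⁻ x in Ω ∩ {x | 0 < x i}, g x := by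
    rw [← setLIntegral_congr hreflect, ← setLIntegral_comp_reflectCoord g]
    refine lintegral_congr_ae <| ae_restrict_of_ae_restrict_of_subset ?_ <|
      ae_restrict_of_forall_mem hneg fun x hx => congrArg g (foldCoord_of_neg hx)
    intro x hx
    simpa using hx.2
  rw [← lintegral_inter_add_sdiff _ Ω hpos, hpos_part, hneg_part, two_mul]

lemma comp_foldCoord_eq_ite (i : Fin d) (u : (Fin d → ℝ) → ℝ) :
    u ∘ foldCoord i = fun x => if 0 ≤ x i then u x else u (reflectCoord i x) := by
  funext x
  split_ifs with h
  · rw [Function.comp_apply, foldCoord_of_nonneg h]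
  · rw [Function.comp_apply, foldCoord_of_neg (not_le.1 h)]

lemma gagliardoP_comp_foldCoord_le {Ω : Set (Fin d → ℝ)} {p s : ℝ}
    (hp : 0 < p) (hexp : 0 ≤ (d : ℝ) + s * p) (hsym : ∀ x, x ∈ Ω ↔ reflectCoord i x ∈ Ω)
    (u : (Fin d → ℝ) → ℝ) :
    gagliardoP d Ω p s (u ∘ foldCoord i) ≤ 4 * gagliardoP d (Ω ∩ {x | 0 < x i}) p s u := by
  set K := gagliardoKernel d p s u
  calc gagliardoP d Ω p s (u ∘ foldCoord i)
      ≤ ∫⁻ x in Ω, ∫⁻ y in Ω, K (foldCoord i x) (foldCoord i y) :=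
        lintegral_mono fun x => lintegral_mono fun y =>
          gagliardoKernel_comp_le hp hexp euclNorm_foldCoord_sub_le u x y
    _ = ∫⁻ x in Ω, 2 * ∫⁻ y in Ω ∩ {x | 0 < x i}, K (foldCoord i x) y := by
        simp only [lintegral_comp_foldCoord hsym]
    _ = 2 * (2 * ∫⁻ x in Ω ∩ {x | 0 < x i}, ∫⁻ y in Ω ∩ {x | 0 < x i}, K x y) := by
        rw [lintegral_const_mul' _ _ ENNReal.ofNat_ne_top,
          lintegral_comp_foldCoord hsym (fun z => ∫⁻ y in Ω ∩ {x | 0 < x i}, K z y)]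
    _ = 4 * gagliardoP d (Ω ∩ {x | 0 < x i}) p s u := by
        rw [gagliardoP_eq_lintegral_gagliardoKernel, ← mul_assoc]
        norm_num [K]

lemma fracSobolevNorm_comp_foldCoord_le {Ω : Set (Fin d → ℝ)} {p s : ℝ}
    (hp : 1 ≤ p) (hs : 0 ≤ s) (hsym : ∀ x, x ∈ Ω ↔ reflectCoord i x ∈ Ω)
    (u : (Fin d → ℝ) → ℝ) :
    fracSobolevNorm d Ω p s (u ∘ foldCoord i) ≤
      4 * fracSobolevNorm d (Ω ∩ {x | 0 < x i}) p s u := by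
  have hp0 : 0 < p := by linarith
  have ht0 : 0 ≤ 1 / p := by positivity
  have ht1 : 1 / p ≤ 1 := (div_le_one hp0).2 hp
  have hLp := lintegral_comp_foldCoord hsym fun z => ENNReal.ofReal (|u z| ^ p)
  have hexp : 0 ≤ (d : ℝ) + s * p := by positivity
  have hgag := gagliardoP_comp_foldCoord_le hp0 hexp hsym u
  rw [fracSobolevNorm, fracSobolevNorm, mul_add]
  gcongr ?_ + ?_
  · calc (∫⁻ x in Ω, ENNReal.ofReal (|(u ∘ foldCoord i) x| ^ p)) ^ (1 / p)
        = (2 * ∫⁻ x in Ω ∩ {x | 0 < x i}, ENNReal.ofReal (|u x| ^ p)) ^ (1 / p) := by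
          rw [← hLp]; rfl
      _ ≤ 2 * (∫⁻ x in Ω ∩ {x | 0 < x i}, ENNReal.ofReal (|u x| ^ p)) ^ (1 / p) :=
          ENNReal.mul_rpow_le_of_one_le one_le_two _ ht0 ht1
      _ ≤ 4 * (∫⁻ x in Ω ∩ {x | 0 < x i}, ENNReal.ofReal (|u x| ^ p)) ^ (1 / p) := by
          gcongr; norm_num
  · calc gagliardoP d Ω p s (u ∘ foldCoord i) ^ (1 / p)
        ≤ (4 * gagliardoP d (Ω ∩ {x | 0 < x i}) p s u) ^ (1 / p) :=
          ENNReal.rpow_le_rpow hgag ht0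
      _ ≤ 4 * gagliardoP d (Ω ∩ {x | 0 < x i}) p s u ^ (1 / p) :=
          ENNReal.mul_rpow_le_of_one_le (by norm_num) _ ht0 ht1

end CoordReflection

theorem even_reflection_fracSobolev_bound_general (n : ℕ) (p s : ℝ)
    (hp : 1 ≤ p) (hs0 : 0 < s)
    (Ω : Set (Fin (n + 1) → ℝ))
    (hsym : ∀ x : Fin (n + 1) → ℝ,
      x ∈ Ω ↔ Function.update x (Fin.last n) (-(x (Fin.last n))) ∈ Ω)
    (u : (Fin (n + 1) → ℝ) → ℝ) :
    fracSobolevNorm (n + 1) Ω p s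
      (fun x => if 0 ≤ x (Fin.last n) then u x
        else u (Function.update x (Fin.last n) (-(x (Fin.last n)))))
      ≤ 4 * fracSobolevNorm (n + 1) (Ω ∩ {x | 0 < x (Fin.last n)}) p s u := by
  have h := fracSobolevNorm_comp_foldCoord_le hp hs0.le hsym u
  rw [comp_foldCoord_eq_ite] at h
  exact h

/-- The even reflection across `{x_d = 0}` of a function on a symmetric open set `Ω`
satisfies `‖u_even‖_{W^s_p(Ω)} ≤ 4 ‖u‖_{W^s_p(Ω⁺)}`, where `Ω⁺ = Ω ∩ {x_d > 0}`. -/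
theorem even_reflection_fracSobolev_bound (n : ℕ) (p s : ℝ)
    (hp : 1 ≤ p) (hs0 : 0 < s) (hs1 : s < 1)
    (Ω : Set (Fin (n + 1) → ℝ)) (hΩ : IsOpen Ω)
    (hsym : ∀ x : Fin (n + 1) → ℝ,
      x ∈ Ω ↔ Function.update x (Fin.last n) (-(x (Fin.last n))) ∈ Ω)
    (u : (Fin (n + 1) → ℝ) → ℝ) (hu : Measurable u)
    (hfin : fracSobolevNorm (n + 1) (Ω ∩ {x | 0 < x (Fin.last n)}) p s u ≠ ⊤) :
    fracSobolevNorm (n + 1) Ω p s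
      (fun x => if 0 ≤ x (Fin.last n) then u x
        else u (Function.update x (Fin.last n) (-(x (Fin.last n)))))
      ≤ 4 * fracSobolevNorm (n + 1) (Ω ∩ {x | 0 < x (Fin.last n)}) p s u :=
  even_reflection_fracSobolev_bound_general n p s hp hs0 Ω hsym u
end

section
/- For each integer j ≥ 0 let i_j := ∫_ℝ r^{2j} √(1 + r²) μ(r) dr, where μ(r) := (2π)^{−1/2} e^{−r²/2}. Then all i_j are finite, and for every integer j ≥ 2 one has i_j = (2j − 1) i_{j−1} + (2j − 3) i_{j−2}. -/
open MeasureTheory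

/-- The standard Gaussian density `μ(r) = (2π)^{-1/2} e^{-r²/2}`. -/
noncomputable def gaussDensity (r : ℝ) : ℝ :=
  (Real.sqrt (2 * Real.pi))⁻¹ * Real.exp (-r ^ 2 / 2)

/-- `i_j = ∫_ℝ r^{2j} √(1 + r²) μ(r) dr`. -/
noncomputable def iGauss (j : ℕ) : ℝ :=
  ∫ r : ℝ, r ^ (2 * j) * Real.sqrt (1 + r ^ 2) * gaussDensity r

/-! Integrate by parts against `r^{2j-3} (1 + r²)^{3/2} μ(r)`. Since `μ' = -r μ` and
`((1 + r²)^{3/2})' = 3 r √(1 + r²)`, its derivative is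
`((2j-3) r^{2j-4} + (2j-1) r^{2j-2} - r^{2j}) √(1 + r²) μ(r)`, and this integrates to zero over `ℝ`
because the primitive is itself integrable. All integrability comes from `√(1 + r²) ≤ 1 + r²`
and the finiteness of the Gaussian moments. -/

open Real

lemma integrable_pow_mul_gaussDensity (n : ℕ) :
    Integrable fun r : ℝ => r ^ n * gaussDensity r := by
  have h := (integrable_rpow_mul_exp_neg_mul_sq (b := 1 / 2) one_half_pos
    (s := n) (neg_one_lt_zero.trans_le n.cast_nonneg)).const_mul (√(2 * π))⁻¹
  refine h.congr (ae_of_all _ fun r => ?_)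
  simp only [rpow_natCast, gaussDensity]
  rw [show -(1 / 2 : ℝ) * r ^ 2 = -r ^ 2 / 2 by ring]
  ring

lemma gaussDensity_nonneg (r : ℝ) : 0 ≤ gaussDensity r := by
  unfold gaussDensity; positivity

lemma sqrt_one_add_sq_le (r : ℝ) : √(1 + r ^ 2) ≤ 1 + r ^ 2 :=
  (sqrt_le_left (by positivity)).2 (by nlinarith [sq_nonneg r])

lemma integrable_pow_mul_sqrt_one_add_sq_mul_gaussDensity (n : ℕ) :
    Integrable fun r : ℝ => r ^ n * √(1 + r ^ 2) * gaussDensity r := by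
  refine ((integrable_pow_mul_gaussDensity n).norm.add
    (integrable_pow_mul_gaussDensity (n + 2)).norm).mono' (by unfold gaussDensity; fun_prop)
    (ae_of_all _ fun r => ?_)
  have hg := gaussDensity_nonneg r
  simp only [Pi.add_apply, norm_mul, norm_pow, Real.norm_eq_abs, abs_of_nonneg hg,
    abs_of_nonneg (sqrt_nonneg _)]
  calc |r| ^ n * √(1 + r ^ 2) * gaussDensity r
      ≤ |r| ^ n * (1 + r ^ 2) * gaussDensity r := by gcongr; exact sqrt_one_add_sq_le r
    _ = |r| ^ n * gaussDensity r + |r| ^ (n + 2) * gaussDensity r := by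
      rw [pow_add, sq_abs]; ring

lemma hasDerivAt_gaussDensity (r : ℝ) : HasDerivAt gaussDensity (-r * gaussDensity r) r := by
  have h := (((hasDerivAt_pow 2 r).neg.div_const 2).exp).const_mul (√(2 * π))⁻¹
  unfold gaussDensity
  refine h.congr_deriv ?_
  simp only [Pi.neg_apply]
  push_cast
  ring

lemma hasDerivAt_one_add_sq_mul_sqrt (r : ℝ) :
    HasDerivAt (fun x : ℝ => (1 + x ^ 2) * √(1 + x ^ 2)) (3 * r * √(1 + r ^ 2)) r := by
  have h1 : HasDerivAt (fun x : ℝ => 1 + x ^ 2) (2 * r) r := by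
    simpa using (hasDerivAt_pow 2 r).const_add 1
  refine (h1.mul (h1.sqrt (by positivity))).congr_deriv ?_
  field_simp
  rw [sq_sqrt (by positivity)]
  ring

lemma hasDerivAt_pow_mul_one_add_sq_mul_sqrt_mul_gaussDensity (m : ℕ) (r : ℝ) :
    HasDerivAt (fun x : ℝ => x ^ (m + 1) * ((1 + x ^ 2) * √(1 + x ^ 2)) * gaussDensity x)
      ((m + 1) * (r ^ m * √(1 + r ^ 2) * gaussDensity r)
        + (m + 3) * (r ^ (m + 2) * √(1 + r ^ 2) * gaussDensity r)
        - r ^ (m + 4) * √(1 + r ^ 2) * gaussDensity r) r := by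
  refine (((hasDerivAt_pow (m + 1) r).mul (hasDerivAt_one_add_sq_mul_sqrt r)).mul
    (hasDerivAt_gaussDensity r)).congr_deriv ?_
  simp only [Pi.mul_apply]
  push_cast
  ring

lemma integral_pow_add_four_mul_sqrt_mul_gaussDensity (m : ℕ) :
    ∫ r : ℝ, r ^ (m + 4) * √(1 + r ^ 2) * gaussDensity r
      = (m + 3) * (∫ r : ℝ, r ^ (m + 2) * √(1 + r ^ 2) * gaussDensity r)
        + (m + 1) * ∫ r : ℝ, r ^ m * √(1 + r ^ 2) * gaussDensity r := by
  have hF (k : ℕ) := integrable_pow_mul_sqrt_one_add_sq_mul_gaussDensity k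
  have hm := (hF m).const_mul (m + 1)
  have hm2 := (hF (m + 2)).const_mul (m + 3)
  have hzero := integral_eq_zero_of_hasDerivAt_of_integrable
    (hasDerivAt_pow_mul_one_add_sq_mul_sqrt_mul_gaussDensity m) ((hm.add hm2).sub (hF (m + 4)))
    (((hF (m + 1)).add (hF (m + 3))).congr (ae_of_all _ fun r => by
      simp only [Pi.add_apply]; ring))
  rw [integral_sub (by exact hm.add hm2) (hF _), integral_add hm hm2, integral_const_mul,
    integral_const_mul] at hzero
  linarith

/-- All the integrals `i_j` are finite, and for `j ≥ 2` the recursion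
`i_j = (2j - 1) i_{j-1} + (2j - 3) i_{j-2}` holds. -/
theorem iGauss_integrable_and_recursion :
    (∀ j : ℕ, Integrable fun r : ℝ => r ^ (2 * j) * Real.sqrt (1 + r ^ 2) * gaussDensity r) ∧
    ∀ j : ℕ, 2 ≤ j →
      iGauss j = (2 * (j : ℝ) - 1) * iGauss (j - 1) + (2 * (j : ℝ) - 3) * iGauss (j - 2) := by
  refine ⟨fun j => integrable_pow_mul_sqrt_one_add_sq_mul_gaussDensity (2 * j), fun j hj => ?_⟩
  obtain ⟨n, rfl⟩ := Nat.exists_eq_add_of_le' hj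
  rw [show n + 2 - 1 = n + 1 by omega, Nat.add_sub_cancel]
  simp only [iGauss, show 2 * (n + 2) = 2 * n + 4 by ring, show 2 * (n + 1) = 2 * n + 2 by ring,
    integral_pow_add_four_mul_sqrt_mul_gaussDensity (2 * n)]
  push_cast
  ring
end

section
/- For all m > 0 and θ > 0, the integrals below are finite and ∫_{ℝ³} (p₁² / √(m² + |p|²)) e^{−√(m² + |p|²)/θ} dp = θ ∫_{ℝ³} e^{−√(m² + |p|²)/θ} dp; by symmetry the same identity holds with p₁ replaced by p₂ or p₃. -/
open MeasureTheory Real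
open scoped RealInnerProductSpace Nat

/-!
Write `p₀ = √(m² + ‖p‖²)`. Integrating by parts along a direction `v`, with
`∂_v e^{-p₀/θ} = -(⟪p, v⟫ / (θ p₀)) e^{-p₀/θ}` and `∂_v ⟪v, p⟫ = ‖v‖²`, gives
`∫ ⟪v, p⟫² / p₀ · e^{-p₀/θ} = θ ‖v‖² ∫ e^{-p₀/θ}`; the coordinate identity is the case `v = eᵢ`.
All integrals converge since `e^{-p₀/θ} ≤ e^{-‖p‖/θ}` decays faster than every power of `‖p‖`.
-/

lemma pow_mul_exp_neg_mul_le {b t : ℝ} (hb : 0 < b) (ht : 0 ≤ t) (n : ℕ) :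
    t ^ n * exp (-(b * t)) ≤ n ! / b ^ n := by
  have h := pow_div_factorial_le_exp (b * t) (mul_nonneg hb.le ht) n
  rw [div_le_iff₀ (by positivity), mul_pow] at h
  rw [le_div_iff₀ (by positivity), exp_neg]
  have := exp_pos (b * t)
  calc t ^ n * (exp (b * t))⁻¹ * b ^ n = b ^ n * t ^ n * (exp (b * t))⁻¹ := by ring
    _ ≤ exp (b * t) * n ! * (exp (b * t))⁻¹ := by gcongr
    _ = n ! := by field_simp

lemma integrable_norm_pow_mul_exp_neg_mul_norm {E : Type*} [NormedAddCommGroup E]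
    [MeasurableSpace E] [BorelSpace E] [SecondCountableTopology E]
    {μ : Measure E} [μ.HasTemperateGrowth] (k : ℕ) {b : ℝ} (hb : 0 < b) :
    Integrable (fun x ↦ ‖x‖ ^ k * exp (-(b * ‖x‖))) μ := by
  have h := integrable_of_le_of_pow_mul_le (μ := μ) (k := k) (C₁ := 1)
    (f := fun x : E ↦ exp (-(b * ‖x‖)))
    (fun x ↦ by rw [norm_of_nonneg (exp_pos _).le, exp_le_one_iff, neg_nonpos]; positivity)
    (fun x ↦ by
      rw [norm_of_nonneg (exp_pos _).le]; exact pow_mul_exp_neg_mul_le hb (norm_nonneg x) _)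
    (by fun_prop)
  simpa only [norm_of_nonneg (exp_pos _).le] using h

section Juttner

variable {E : Type*} [NormedAddCommGroup E] {m θ : ℝ}

noncomputable def juttner (m θ : ℝ) (x : E) : ℝ := exp (-√(m ^ 2 + ‖x‖ ^ 2) / θ)

lemma norm_le_sqrt_sq_add_norm_sq (m : ℝ) (x : E) : ‖x‖ ≤ √(m ^ 2 + ‖x‖ ^ 2) :=
  Real.le_sqrt_of_sq_le (by nlinarith [sq_nonneg m])

@[fun_prop]
lemma continuous_juttner : Continuous (juttner (E := E) m θ) := by
  unfold juttner; fun_prop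

lemma juttner_pos (x : E) : 0 < juttner m θ x := exp_pos _

lemma juttner_le_exp_neg_mul_norm (hθ : 0 < θ) (x : E) :
    juttner m θ x ≤ exp (-(θ⁻¹ * ‖x‖)) := by
  rw [juttner, exp_le_exp, neg_div, neg_le_neg_iff, inv_mul_eq_div]
  gcongr
  exact norm_le_sqrt_sq_add_norm_sq m x

variable [MeasurableSpace E] [BorelSpace E] [SecondCountableTopology E]
  {μ : Measure E} [μ.HasTemperateGrowth]

lemma integrable_norm_pow_mul_juttner (hθ : 0 < θ) (k : ℕ) :
    Integrable (fun x ↦ ‖x‖ ^ k * juttner m θ x) μ := by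
  refine (integrable_norm_pow_mul_exp_neg_mul_norm k (inv_pos.2 hθ)).mono'
    (by fun_prop) (.of_forall fun x ↦ ?_)
  have := juttner_pos (m := m) (θ := θ) x
  rw [norm_mul, norm_of_nonneg this.le, norm_pow, norm_norm]
  gcongr
  exact juttner_le_exp_neg_mul_norm hθ x

lemma integrable_juttner (hθ : 0 < θ) : Integrable (juttner m θ) μ := by
  simpa using integrable_norm_pow_mul_juttner (μ := μ) (m := m) hθ 0

end Juttner

section InnerProductSpace

variable {E : Type*} [NormedAddCommGroup E] [InnerProductSpace ℝ E] {m θ : ℝ}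

lemma hasFDerivAt_juttner (hm : m ≠ 0) (x : E) :
    HasFDerivAt (juttner m θ)
      ((-juttner m θ x / (θ * √(m ^ 2 + ‖x‖ ^ 2))) • innerSL ℝ x) x := by
  have hpos : m ^ 2 + ‖x‖ ^ 2 ≠ 0 := by positivity
  convert ((((hasStrictFDerivAt_norm_sq x).hasFDerivAt.const_add (m ^ 2)).sqrt hpos).neg.mul_const
    θ⁻¹).exp using 1
  · ext y; simp [juttner, div_eq_mul_inv]
  · ext y
    simp [juttner]
    field_simp

section Integrable

variable [MeasurableSpace E] [BorelSpace E] [SecondCountableTopology E]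
  {μ : Measure E} [μ.HasTemperateGrowth]

lemma integrable_inner_mul_juttner (hθ : 0 < θ) (v : E) :
    Integrable (fun x ↦ ⟪v, x⟫ * juttner m θ x) μ := by
  refine ((integrable_norm_pow_mul_juttner (m := m) hθ 1).const_mul ‖v‖).mono' (by fun_prop)
    (.of_forall fun x ↦ ?_)
  have := juttner_pos (m := m) (θ := θ) x
  rw [norm_mul, norm_of_nonneg this.le, pow_one, ← mul_assoc]
  gcongr
  exact abs_real_inner_le_norm v x

lemma integrable_inner_sq_div_mul_juttner (hθ : 0 < θ) (v : E) :
    Integrable (fun x ↦ ⟪v, x⟫ ^ 2 / √(m ^ 2 + ‖x‖ ^ 2) * juttner m θ x) μ := by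
  refine ((integrable_norm_pow_mul_juttner (m := m) hθ 1).const_mul (‖v‖ ^ 2)).mono'
    (by fun_prop : Measurable _).aestronglyMeasurable
    (.of_forall fun x ↦ ?_)
  have hx := norm_le_sqrt_sq_add_norm_sq m x
  have := juttner_pos (m := m) (θ := θ) x
  rw [norm_mul, norm_of_nonneg this.le, norm_of_nonneg (by positivity), pow_one, ← mul_assoc]
  gcongr
  refine div_le_of_le_mul₀ (by positivity) (by positivity) ?_
  calc ⟪v, x⟫ ^ 2 ≤ (‖v‖ * ‖x‖) ^ 2 := by
        rw [← sq_abs]; gcongr; exact abs_real_inner_le_norm v x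
    _ = ‖v‖ ^ 2 * ‖x‖ * ‖x‖ := by ring
    _ ≤ ‖v‖ ^ 2 * ‖x‖ * √(m ^ 2 + ‖x‖ ^ 2) := by gcongr

end Integrable

variable [FiniteDimensional ℝ E] [MeasurableSpace E] [BorelSpace E]
  {μ : Measure E} [μ.IsAddHaarMeasure]

theorem integral_inner_sq_div_mul_juttner (hm : m ≠ 0) (hθ : 0 < θ) (v : E) :
    ∫ x, ⟪v, x⟫ ^ 2 / √(m ^ 2 + ‖x‖ ^ 2) * juttner m θ x ∂μ
      = θ * ‖v‖ ^ 2 * ∫ x, juttner m θ x ∂μ := by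
  set J' : E → E →L[ℝ] ℝ := fun x ↦ (-juttner m θ x / (θ * √(m ^ 2 + ‖x‖ ^ 2))) • innerSL ℝ x
  have hJ' : ∀ x, ⟪v, x⟫ * J' x v = -θ⁻¹ * (⟪v, x⟫ ^ 2 / √(m ^ 2 + ‖x‖ ^ 2) * juttner m θ x) := by
    intro x
    simp only [J', smul_apply, innerSL_apply_apply, smul_eq_mul, real_inner_comm x v]
    field_simp
  have ibp := integral_bilinear_hasFDerivAt_right_eq_neg_left_of_integrable (μ := μ)
    (B := ContinuousLinearMap.mul ℝ ℝ) (f := innerSL ℝ v) (f' := fun _ ↦ innerSL ℝ v)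
    (g := juttner m θ) (g' := J') (v := v) ?_ ?_ ?_
    (fun x _ ↦ (innerSL ℝ v).hasFDerivAt) (fun x _ ↦ hasFDerivAt_juttner hm x)
  · simp only [ContinuousLinearMap.mul_apply', innerSL_apply_apply, hJ', integral_const_mul,
      real_inner_self_eq_norm_sq] at ibp
    rw [neg_mul, neg_inj, inv_mul_eq_div, div_eq_iff hθ.ne'] at ibp
    rw [ibp]
    ring
  · exact (integrable_juttner hθ).const_mul _
  · simpa only [ContinuousLinearMap.mul_apply', innerSL_apply_apply, hJ'] using
      (integrable_inner_sq_div_mul_juttner hθ v).const_mul (-θ⁻¹)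
  · exact integrable_inner_mul_juttner hθ v

end InnerProductSpace

/-- Second-moment identity for the Jüttner density: for `m, θ > 0` the integrals below are
finite and `∫ (p_i² / √(m² + |p|²)) e^{-√(m² + |p|²)/θ} dp = θ ∫ e^{-√(m² + |p|²)/θ} dp`
for every coordinate `i`. -/
theorem juttner_second_moment (m θ : ℝ) (hm : 0 < m) (hθ : 0 < θ) :
    (Integrable fun p : EuclideanSpace ℝ (Fin 3) =>
      Real.exp (-Real.sqrt (m ^ 2 + ‖p‖ ^ 2) / θ)) ∧
    (∀ i : Fin 3, Integrable fun p : EuclideanSpace ℝ (Fin 3) =>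
      (p i) ^ 2 / Real.sqrt (m ^ 2 + ‖p‖ ^ 2) * Real.exp (-Real.sqrt (m ^ 2 + ‖p‖ ^ 2) / θ)) ∧
    ∀ i : Fin 3,
      (∫ p : EuclideanSpace ℝ (Fin 3),
          (p i) ^ 2 / Real.sqrt (m ^ 2 + ‖p‖ ^ 2) * Real.exp (-Real.sqrt (m ^ 2 + ‖p‖ ^ 2) / θ))
        = θ * ∫ p : EuclideanSpace ℝ (Fin 3), Real.exp (-Real.sqrt (m ^ 2 + ‖p‖ ^ 2) / θ) := by
  refine ⟨integrable_juttner hθ, fun i ↦ ?_, fun i ↦ ?_⟩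
  · simpa [EuclideanSpace.inner_single_left, juttner] using
      integrable_inner_sq_div_mul_juttner (m := m) (μ := volume) hθ
        (EuclideanSpace.single i (1 : ℝ))
  · simpa [EuclideanSpace.inner_single_left, juttner] using
      integral_inner_sq_div_mul_juttner (μ := volume) hm.ne' hθ (EuclideanSpace.single i (1 : ℝ))
end

section
/- For every α ∈ (0,1) and every c > 0 there exists a constant C = C(α, c) > 0 such that for all p¹, p² ∈ ℝ³: ∫_{ℝ³} e^{−c√(1+|q|²)} (1 + |p¹ − q|^{−(1+α)}) (1 + |p² − q|^{−1}) dq ≤ C. -/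
/-!
With `a = max(1, |p₁ - q|⁻¹)` and `b = max(1, |p₂ - q|⁻¹)`, the bound
`a^s b^t ≤ max(a, b)^{s+t} ≤ a^{s+t} + b^{s+t}` reduces the product of the two singular factors
to a sum of single ones of total order `2 + α < 3`. For a single factor, split at distance `1`
from the singular point `p`: inside, the weight is at most `1` and `|q - p|^{-(2+α)}` is locally
integrable; outside, the singular factor is at most `1` and the weight is integrable. By
translation invariance the resulting bound does not depend on `p`.
-/

open MeasureTheory Metric Module Real
open scoped Nat

theorem rpow_mul_rpow_le_rpow_add_rpow {a b s t : ℝ} (ha : 0 ≤ a) (hb : 0 ≤ b) (hs : 0 ≤ s)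
    (ht : 0 ≤ t) : a ^ s * b ^ t ≤ a ^ (s + t) + b ^ (s + t) := by
  have hab : 0 ≤ max a b := le_max_of_le_left ha
  calc a ^ s * b ^ t ≤ max a b ^ s * max a b ^ t := by
        gcongr
        exacts [le_max_left a b, le_max_right a b]
    _ = max a b ^ (s + t) := (rpow_add_of_nonneg hab hs ht).symm
    _ ≤ a ^ (s + t) + b ^ (s + t) := by
        rcases max_cases a b with ⟨h, -⟩ | ⟨h, -⟩ <;> rw [h]
        · exact le_add_of_nonneg_right (rpow_nonneg hb _)
        · exact le_add_of_nonneg_left (rpow_nonneg ha _)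

theorem max_one_inv_rpow_le_one_add_rpow_neg {x : ℝ} (hx : 0 ≤ x) (r : ℝ) :
    max 1 x⁻¹ ^ r ≤ 1 + x ^ (-r) := by
  rw [rpow_neg_eq_inv_rpow]
  rcases max_cases 1 x⁻¹ with ⟨h, -⟩ | ⟨h, -⟩ <;> rw [h]
  · rw [one_rpow]
    exact le_add_of_nonneg_right (rpow_nonneg (inv_nonneg.2 hx) _)
  · exact le_add_of_nonneg_left zero_le_one

theorem one_add_rpow_neg_le_two_mul_max_one_inv_rpow {x r : ℝ} (hx : 0 ≤ x) (hr : 0 ≤ r) :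
    1 + x ^ (-r) ≤ 2 * max 1 x⁻¹ ^ r := by
  have h1 : 1 ≤ max 1 x⁻¹ ^ r := one_le_rpow (le_max_left _ _) hr
  have h2 : x ^ (-r) ≤ max 1 x⁻¹ ^ r := by
    rw [rpow_neg_eq_inv_rpow]
    exact rpow_le_rpow (inv_nonneg.2 hx) (le_max_right _ _) hr
  linarith

theorem one_add_rpow_neg_mul_one_add_rpow_neg_le {x y s t : ℝ} (hx : 0 ≤ x) (hy : 0 ≤ y)
    (hs : 0 ≤ s) (ht : 0 ≤ t) :
    (1 + x ^ (-s)) * (1 + y ^ (-t)) ≤ 4 * ((1 + x ^ (-(s + t))) + (1 + y ^ (-(s + t)))) := by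
  calc (1 + x ^ (-s)) * (1 + y ^ (-t))
      ≤ (2 * max 1 x⁻¹ ^ s) * (2 * max 1 y⁻¹ ^ t) := by
        gcongr
        exacts [one_add_rpow_neg_le_two_mul_max_one_inv_rpow hx hs,
          one_add_rpow_neg_le_two_mul_max_one_inv_rpow hy ht]
    _ = 4 * (max 1 x⁻¹ ^ s * max 1 y⁻¹ ^ t) := by ring
    _ ≤ 4 * (max 1 x⁻¹ ^ (s + t) + max 1 y⁻¹ ^ (s + t)) := by
        gcongr
        exact rpow_mul_rpow_le_rpow_add_rpow (zero_le_one.trans (le_max_left _ _))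
          (zero_le_one.trans (le_max_left _ _)) hs ht
    _ ≤ 4 * ((1 + x ^ (-(s + t))) + (1 + y ^ (-(s + t)))) := by
        gcongr
        exacts [max_one_inv_rpow_le_one_add_rpow_neg hx (s + t),
          max_one_inv_rpow_le_one_add_rpow_neg hy (s + t)]

theorem exp_neg_le_factorial_mul_rpow_neg {x : ℝ} (hx : 0 < x) (n : ℕ) :
    exp (-x) ≤ n ! * x ^ (-(n : ℝ)) := by
  rw [rpow_neg hx.le, rpow_natCast, exp_neg, ← div_eq_mul_inv, ← inv_div]
  exact inv_anti₀ (by positivity) (pow_div_factorial_le_exp x hx.le n)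

variable {E : Type*} [NormedAddCommGroup E]

noncomputable def singularMajorant (w : E → ℝ) (r : ℝ) (p q : E) : ℝ :=
  2 * w q + (ball (0 : E) 1).indicator (fun x => ‖x‖ ^ (-r)) (q - p)

theorem mul_one_add_dist_rpow_neg_le_singularMajorant {w : E → ℝ} {r : ℝ} {p q : E}
    (hw0 : 0 ≤ w q) (hw1 : w q ≤ 1) (hr : 0 ≤ r) :
    w q * (1 + dist p q ^ (-r)) ≤ singularMajorant w r p q := by
  rw [singularMajorant, dist_comm, dist_eq_norm]
  have hk : 0 ≤ ‖q - p‖ ^ (-r) := rpow_nonneg (norm_nonneg _) _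
  by_cases hq : q - p ∈ ball (0 : E) 1
  · rw [Set.indicator_of_mem hq]
    nlinarith [mul_le_of_le_one_left hk hw1]
  · rw [Set.indicator_of_notMem hq]
    have hk1 : ‖q - p‖ ^ (-r) ≤ 1 :=
      rpow_le_one_of_one_le_of_nonpos (by simpa using hq) (neg_nonpos.2 hr)
    nlinarith

theorem mul_one_add_dist_rpow_neg_mul_one_add_dist_rpow_neg_le {w : E → ℝ} {s t : ℝ}
    {p₁ p₂ q : E} (hw0 : 0 ≤ w q) (hw1 : w q ≤ 1) (hs : 0 ≤ s) (ht : 0 ≤ t) :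
    w q * (1 + dist p₁ q ^ (-s)) * (1 + dist p₂ q ^ (-t))
      ≤ 4 * (singularMajorant w (s + t) p₁ q + singularMajorant w (s + t) p₂ q) := by
  have hst : 0 ≤ s + t := add_nonneg hs ht
  calc w q * (1 + dist p₁ q ^ (-s)) * (1 + dist p₂ q ^ (-t))
      ≤ w q * (4 * ((1 + dist p₁ q ^ (-(s + t))) + (1 + dist p₂ q ^ (-(s + t))))) := by
        rw [mul_assoc]
        exact mul_le_mul_of_nonneg_left
          (one_add_rpow_neg_mul_one_add_rpow_neg_le dist_nonneg dist_nonneg hs ht) hw0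
    _ = 4 * (w q * (1 + dist p₁ q ^ (-(s + t))) + w q * (1 + dist p₂ q ^ (-(s + t)))) := by ring
    _ ≤ 4 * (singularMajorant w (s + t) p₁ q + singularMajorant w (s + t) p₂ q) := by
        gcongr <;> exact mul_one_add_dist_rpow_neg_le_singularMajorant hw0 hw1 hst

section Integrability

variable [NormedSpace ℝ E] [FiniteDimensional ℝ E] [MeasurableSpace E] [BorelSpace E]
  {μ : Measure E} [μ.IsAddHaarMeasure]

theorem integrable_indicator_ball_norm_rpow_neg {r : ℝ} (hr0 : 0 ≤ r) (hr : r < finrank ℝ E) :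
    Integrable ((ball (0 : E) 1).indicator fun x => ‖x‖ ^ (-r)) μ := by
  have hd : 1 ≤ finrank ℝ E := by
    have : (0 : ℝ) < finrank ℝ E := hr0.trans_lt hr
    exact_mod_cast this
  refine (integrableOn_ball_of_norm_le_rpow hd (C := 1) hr
    (Filter.Eventually.of_forall fun x => ?_)
    (measurable_norm.pow_const _).aestronglyMeasurable).integrable_indicator measurableSet_ball
  rw [one_mul, norm_of_nonneg (rpow_nonneg (norm_nonneg x) _)]

theorem integrable_singularMajorant {w : E → ℝ} (hw : Integrable w μ) {r : ℝ} (hr0 : 0 ≤ r)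
    (hr : r < finrank ℝ E) (p : E) : Integrable (singularMajorant w r p) μ :=
  (hw.const_mul 2).add ((integrable_indicator_ball_norm_rpow_neg hr0 hr).comp_sub_right p)

theorem integral_singularMajorant {w : E → ℝ} (hw : Integrable w μ) {r : ℝ} (hr0 : 0 ≤ r)
    (hr : r < finrank ℝ E) (p : E) :
    ∫ q, singularMajorant w r p q ∂μ = 2 * ∫ q, w q ∂μ + ∫ x in ball 0 1, ‖x‖ ^ (-r) ∂μ := by
  unfold singularMajorant
  rw [integral_add (hw.const_mul 2)
    ((integrable_indicator_ball_norm_rpow_neg hr0 hr).comp_sub_right p), integral_const_mul,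
    integral_sub_right_eq_self (μ := μ) ((ball (0 : E) 1).indicator fun x => ‖x‖ ^ (-r)) p,
    integral_indicator measurableSet_ball]

theorem integrable_exp_neg_mul_sqrt_one_add_norm_sq {c : ℝ} (hc : 0 < c) :
    Integrable (fun x : E => exp (-c * √(1 + ‖x‖ ^ 2))) μ := by
  set n : ℕ := finrank ℝ E + 1
  have hdecay :
      Integrable (fun x : E => n ! * (c / 2) ^ (-(n : ℝ)) * (1 + ‖x‖) ^ (-(n : ℝ))) μ :=
    (integrable_one_add_norm (by simp [n])).const_mul _
  refine hdecay.mono' (by fun_prop) (Filter.Eventually.of_forall fun x => ?_)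
  have hsqrt : (1 + ‖x‖) / 2 ≤ √(1 + ‖x‖ ^ 2) :=
    (le_sqrt (by positivity) (by positivity)).2 (by nlinarith [norm_nonneg x])
  rw [norm_of_nonneg (exp_nonneg _), mul_assoc, ← mul_rpow (by positivity) (by positivity)]
  calc exp (-c * √(1 + ‖x‖ ^ 2)) ≤ exp (-(c / 2 * (1 + ‖x‖))) := by
        gcongr
        nlinarith
    _ ≤ n ! * (c / 2 * (1 + ‖x‖)) ^ (-(n : ℝ)) :=
        exp_neg_le_factorial_mul_rpow_neg (by positivity) n

theorem lintegral_mul_one_add_dist_rpow_neg_mul_one_add_dist_rpow_neg_le {w : E → ℝ}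
    (hw : Integrable w μ) (hw0 : ∀ q, 0 ≤ w q) (hw1 : ∀ q, w q ≤ 1) {s t : ℝ} (hs : 0 ≤ s)
    (ht : 0 ≤ t) (hst : s + t < finrank ℝ E) (p₁ p₂ : E) :
    ∫⁻ q, ENNReal.ofReal (w q * (1 + dist p₁ q ^ (-s)) * (1 + dist p₂ q ^ (-t))) ∂μ
      ≤ ENNReal.ofReal (8 * (2 * ∫ q, w q ∂μ + ∫ x in ball 0 1, ‖x‖ ^ (-(s + t)) ∂μ)) := by
  set M := singularMajorant w (s + t)
  have hst0 : 0 ≤ s + t := add_nonneg hs ht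
  have hM : ∀ p, Integrable (M p) μ := integrable_singularMajorant hw hst0 hst
  have hbound q := mul_one_add_dist_rpow_neg_mul_one_add_dist_rpow_neg_le
    (p₁ := p₁) (p₂ := p₂) (hw0 q) (hw1 q) hs ht
  have hM_nonneg q : 0 ≤ 4 * (M p₁ q + M p₂ q) :=
    (mul_nonneg (mul_nonneg (hw0 q) (by positivity)) (by positivity)).trans (hbound q)
  calc _ ≤ ∫⁻ q, ENNReal.ofReal (4 * (M p₁ q + M p₂ q)) ∂μ :=
        lintegral_mono fun q => ENNReal.ofReal_le_ofReal (hbound q)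
    _ = ENNReal.ofReal (∫ q, 4 * (M p₁ q + M p₂ q) ∂μ) :=
        (ofReal_integral_eq_lintegral_ofReal (((hM p₁).add (hM p₂)).const_mul 4)
          (Filter.Eventually.of_forall hM_nonneg)).symm
    _ = _ := by
        rw [integral_const_mul, integral_add (hM p₁) (hM p₂),
          integral_singularMajorant hw hst0 hst, integral_singularMajorant hw hst0 hst]
        ring_nf

end Integrability

/-- For `α ∈ (0,1)` and `c > 0`, the integral of the product of two Riesz-type singularities
of orders `1 + α` and `1` against the weight `e^{-c√(1+|q|²)}` is bounded uniformly in the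
two singular points. -/
theorem double_riesz_singularity_bound (α c : ℝ) (hα0 : 0 < α) (hα1 : α < 1) (hc : 0 < c) :
    ∃ C : ℝ, 0 < C ∧ ∀ p₁ p₂ : EuclideanSpace ℝ (Fin 3),
      (∫⁻ q, ENNReal.ofReal
          (Real.exp (-c * Real.sqrt (1 + ‖q‖ ^ 2))
            * (1 + dist p₁ q ^ (-(1 + α))) * (1 + (dist p₂ q)⁻¹)))
        ≤ ENNReal.ofReal C := by
  set w := fun q : EuclideanSpace ℝ (Fin 3) => exp (-c * √(1 + ‖q‖ ^ 2))
  have hw : Integrable w := integrable_exp_neg_mul_sqrt_one_add_norm_sq hc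
  have hw0 q : 0 ≤ w q := exp_nonneg _
  have hw1 q : w q ≤ 1 := exp_le_one_iff.2 (by nlinarith [sqrt_nonneg (1 + ‖q‖ ^ 2)])
  have hst : 1 + α + 1 < finrank ℝ (EuclideanSpace ℝ (Fin 3)) := by simp; linarith
  set K :=
    2 * (∫ q, w q) + ∫ x in ball (0 : EuclideanSpace ℝ (Fin 3)) 1, ‖x‖ ^ (-(1 + α + 1))
  have hK : 0 ≤ K := by positivity
  refine ⟨8 * K + 1, by positivity, fun p₁ p₂ => ?_⟩
  calc _ = ∫⁻ q, ENNReal.ofReal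
          (w q * (1 + dist p₁ q ^ (-(1 + α))) * (1 + dist p₂ q ^ (-1 : ℝ))) := by
        simp_rw [rpow_neg_one]; rfl
    _ ≤ ENNReal.ofReal (8 * K) :=
        lintegral_mul_one_add_dist_rpow_neg_mul_one_add_dist_rpow_neg_le hw hw0 hw1
          (by linarith) zero_le_one hst p₁ p₂
    _ ≤ ENNReal.ofReal (8 * K + 1) := ENNReal.ofReal_le_ofReal (by linarith)
end
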